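/- If a connected finite graph G isometrically embeds into the sphere S^n (n ≥ 2) of some radius r, then G is a path graph, a cycle graph, a complete graph on at most n+2 vertices, or a subgraph of G_n. -/

import Mathlib

open Real

/-- Geodesic distance on the sphere of radius `r` centered at the origin of `ℝ^d`:
`d(p,q) = r · arccos(⟨p,q⟩ / r²)`. -/
noncomputable def sphereGeoDist {d : ℕ} (r : ℝ) (p q : EuclideanSpace ℝ (Fin d)) : ℝ :=
  r * Real.arccos ((inner ℝ p q : ℝ) / r ^ 2)

/-- The abstract graph `G_n`: vertices are the `2(n+1)` signed standard coordinate
directions (an index together with a sign), adjacent iff non-antipodal, i.e. the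
indices differ. -/
def GnAbs (n : ℕ) : SimpleGraph (Fin (n + 1) × Bool) where
  Adj a b := a.1 ≠ b.1
  symm := ⟨fun _ _ h => Ne.symm h⟩
  loopless := ⟨fun _ h => h rfl⟩

/-!
Write `θ = 1 / r` for the angle subtended by an edge. An isometric embedding turns distances into
inner products, `⟪f x, f y⟫ = r² cos (θ d(x, y))`, with `θ d(x, y) ≤ π`.

If `G` is complete, the images are equiangular with inner product `r² cos θ < r²`, so the only
linear relations among them have constant coefficients and there are at most `n + 2` of them.

Otherwise two vertices are at distance `2`, so `θ ≤ π / 2`. If `θ = π / 2`, adjacent vertices go to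
orthogonal vectors and vertices at distance `2` to antipodal ones; the images then lie on at most
`n + 1` mutually orthogonal lines, which embeds `G` in `G_n`. If `θ < π / 2` and `a`, `b` are at
distance `2` with a common neighbour `y`, then `f b` is the reflection of `f a` in the axis through
`f y`; a third neighbour `c` of `y` would need `⟪f a, f c⟫ + ⟪f b, f c⟫ = 2 r² cos² θ` with both
terms in `{r² cos θ, r² cos 2θ}`, which is impossible. So the neighbours of a vertex of degree at
least three are pairwise adjacent, and in a connected graph this spreads until the graph is
complete; hence `G` has maximum degree two and is a path or a cycle.
-/

open SimpleGraph
open scoped InnerProductSpace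

section SphereGeoDist

variable {d : ℕ} {r : ℝ}

lemma sphereGeoDist_le_mul_pi (hr : 0 ≤ r) (p q : EuclideanSpace ℝ (Fin d)) :
    sphereGeoDist r p q ≤ r * π :=
  mul_le_mul_of_nonneg_left (arccos_le_pi _) hr

lemma inner_eq_sq_mul_cos_sphereGeoDist (hr : 0 < r) {p q : EuclideanSpace ℝ (Fin d)}
    (hp : ‖p‖ = r) (hq : ‖q‖ = r) : ⟪p, q⟫_ℝ = r ^ 2 * cos (sphereGeoDist r p q / r) := by
  have hr2 : 0 < r ^ 2 := by positivity
  have hpq := abs_le.mp (abs_real_inner_le_norm p q)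
  rw [hp, hq, ← sq] at hpq
  rw [sphereGeoDist, mul_div_cancel_left₀ _ hr.ne', cos_arccos, mul_div_cancel₀ _ hr2.ne']
  · rw [le_div_iff₀ hr2]; linarith
  · rw [div_le_iff₀ hr2]; linarith

end SphereGeoDist

section InnerProductSpace

variable {E : Type*} [NormedAddCommGroup E] [InnerProductSpace ℝ E]

lemma eq_neg_of_inner_eq_neg_sq {r : ℝ} {p q : E} (hp : ‖p‖ = r) (hq : ‖q‖ = r)
    (hpq : ⟪p, q⟫_ℝ = -r ^ 2) : q = -p := by
  have h : ‖p + q‖ ^ 2 = 0 := by rw [norm_add_sq_real, hp, hq, hpq]; ring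
  rw [eq_neg_iff_add_eq_zero, add_comm, ← norm_eq_zero]
  exact pow_eq_zero_iff two_ne_zero |>.mp h

/-- With `t = cos θ`: on a sphere, a point at angle `θ` from `y` and `2θ` from `a`, where `a` is
itself at angle `θ` from `y`, is the reflection of `a` in the axis through `y`. -/
lemma eq_two_mul_smul_sub_of_inner_eq {r t : ℝ} {y a b : E} (hy : ‖y‖ = r) (ha : ‖a‖ = r)
    (hb : ‖b‖ = r) (hya : ⟪y, a⟫_ℝ = r ^ 2 * t) (hyb : ⟪y, b⟫_ℝ = r ^ 2 * t)
    (hab : ⟪a, b⟫_ℝ = r ^ 2 * (2 * t ^ 2 - 1)) : b = (2 * t) • y - a := by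
  have h : ⟪b - ((2 * t) • y - a), b - ((2 * t) • y - a)⟫_ℝ = 0 := by
    simp only [inner_sub_left, inner_sub_right, real_inner_smul_left, real_inner_smul_right]
    simp only [real_inner_self_eq_norm_sq, real_inner_comm y, real_inner_comm a b, hy, ha, hb,
      hya, hyb, hab]
    ring
  exact sub_eq_zero.mp (inner_self_eq_zero.mp h)

lemma card_le_finrank_add_one_of_inner_eq [FiniteDimensional ℝ E] {V : Type*} [Fintype V]
    {f : V → E} {r c : ℝ} (hf : ∀ x, ‖f x‖ = r) (hc : c ≠ r ^ 2)
    (hinner : ∀ x y, x ≠ y → ⟪f x, f y⟫_ℝ = c) :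
    Fintype.card V ≤ Module.finrank ℝ E + 1 := by
  classical
  let T := Fintype.linearCombination ℝ f
  have hker : LinearMap.ker T ≤ ℝ ∙ fun _ => 1 := by
    intro a ha
    have hgram : ∀ j i, ⟪f j, f i⟫_ℝ = c + if j = i then r ^ 2 - c else 0 := by
      intro j i
      split_ifs with h
      · rw [h, real_inner_self_eq_norm_sq, hf]; ring
      · rw [hinner j i h, add_zero]
    have hcoord : ∀ j, c * ∑ i, a i + a j * (r ^ 2 - c) = 0 := by
      intro j
      have h0 : ⟪f j, T a⟫_ℝ = 0 := by rw [LinearMap.mem_ker.mp ha, inner_zero_right]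
      simpa [T, Fintype.linearCombination_apply, inner_sum, real_inner_smul_right, hgram,
        mul_add, Finset.sum_add_distrib, ← Finset.mul_sum, mul_comm] using h0
    rw [Submodule.mem_span_singleton]
    refine ⟨-(c * ∑ i, a i) / (r ^ 2 - c), funext fun j => ?_⟩
    rw [Pi.smul_apply, smul_eq_mul, mul_one, div_eq_iff (sub_ne_zero.mpr hc.symm)]
    linarith [hcoord j]
  have hker_le : Module.finrank ℝ (LinearMap.ker T) ≤ 1 :=
    (Submodule.finrank_mono hker).trans
      (by simpa using finrank_span_le_card ({fun _ => 1} : Set (V → ℝ)))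
  have hrange_le : Module.finrank ℝ (LinearMap.range T) ≤ Module.finrank ℝ E :=
    Submodule.finrank_le _
  have := LinearMap.finrank_range_add_finrank_ker T
  rw [Module.finrank_fintype_fun_eq_card] at this
  omega

/-- `ι x` numbers the line `ℝ ∙ f x` and records on which side of the origin `f x` lies. -/
lemma exists_injective_fst_ne_of_inner_eq_zero_or_eq_neg [FiniteDimensional ℝ E] {n : ℕ}
    (hE : Module.finrank ℝ E ≤ n + 1) {V : Type*} {f : V → E} (hinj : Function.Injective f)
    (hf0 : ∀ x, f x ≠ 0) (hf : ∀ x y, x ≠ y → ⟪f x, f y⟫_ℝ = 0 ∨ f y = -f x) :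
    ∃ ι : V → Fin (n + 1) × Bool, Function.Injective ι ∧
      ∀ x y, ⟪f x, f y⟫_ℝ = 0 → (ι x).1 ≠ (ι y).1 := by
  classical
  let s : Setoid V := Setoid.ker fun x => ({f x, -f x} : Set E)
  have hs : ∀ {x y}, s x y ↔ f x = f y ∨ f x = -f y := by
    intro x y
    simp only [s, Setoid.ker_def, Set.pair_eq_pair_iff, neg_eq_iff_eq_neg, neg_neg, and_self]
  let cls : V → Quotient s := Quotient.mk s
  have hout : ∀ x, f x = f (cls x).out ∨ f x = -f (cls x).out :=
    fun x => hs.mp (s.symm (Quotient.mk_out (s := s) x))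
  have hli : LinearIndependent ℝ fun q : Quotient s => f q.out := by
    refine linearIndependent_of_ne_zero_of_inner_eq_zero (fun q => hf0 _) fun q q' hqq' => ?_
    have hne : ¬s q.out q'.out := fun h => hqq' (Quotient.out_equiv_out.mp h)
    refine (hf _ _ fun h => hne (hs.mpr (Or.inl (congrArg f h)))).resolve_right fun h => ?_
    exact hne (hs.mpr (Or.inr (by rw [h, neg_neg])))
  obtain ⟨emb⟩ : Nonempty (Quotient s ↪ Fin (n + 1)) := by
    have := hli.finite
    have := Fintype.ofFinite (Quotient s)
    exact Function.Embedding.nonempty_of_card_le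
      (hli.fintype_card_le_finrank.trans (by simpa using hE))
  refine ⟨fun x => (emb (cls x), decide (f x = f (cls x).out)), fun x y hxy => ?_,
    fun x y h hxy => ?_⟩
  · simp only [Prod.mk.injEq, decide_eq_decide] at hxy
    obtain ⟨hq, hsign⟩ := hxy
    replace hq : cls x = cls y := emb.injective hq
    have hx := hout x
    rw [hq] at hsign hx
    apply hinj
    rcases hx with hx | hx <;> rcases hout y with hy | hy <;> simp_all
  · rcases hs.mp (Quotient.exact (emb.injective hxy)) with hxy' | hxy' <;>
      simp [hxy', hf0] at h

end InnerProductSpace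

namespace SimpleGraph

variable {V : Type*} {G : SimpleGraph V}

lemma cycleGraph_adj_iff {n : ℕ} (hn : 2 ≤ n) {u v : Fin n} :
    (cycleGraph n).Adj u v ↔ u.val + 1 = v.val ∨ v.val + 1 = u.val ∨
      (u.val = 0 ∧ v.val + 1 = n ∨ v.val = 0 ∧ u.val + 1 = n) := by
  rw [cycleGraph_adj']
  rcases lt_trichotomy u v with h | rfl | h
  · rw [Fin.coe_sub_iff_lt.mpr h, Fin.sub_val_of_le h.le]
    omega
  · rw [Fin.sub_val_of_le le_rfl]
    omega
  · rw [Fin.sub_val_of_le h.le, Fin.coe_sub_iff_lt.mpr h]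
    omega

lemma Connected.eq_top_of_adj_of_three_neighbors (hconn : G.Connected)
    (hclique : ∀ y a b c, G.Adj y a → G.Adj y b → G.Adj y c → a ≠ b → a ≠ c → b ≠ c → G.Adj a b)
    {z a b c : V} (ha : G.Adj z a) (hb : G.Adj z b) (hc : G.Adj z c) (hab : a ≠ b) (hac : a ≠ c)
    (hbc : b ≠ c) : G = ⊤ := by
  have third : ∀ u v, ∃ x, G.Adj z x ∧ x ≠ u ∧ x ≠ v := by
    intro u v
    by_contra! h
    rcases eq_or_ne a u with rfl | hau
    · exact hbc ((h b hb hab.symm).trans (h c hc hac.symm).symm)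
    rcases eq_or_ne b u with rfl | hbu
    · exact hac ((h a ha hau).trans (h c hc hbc.symm).symm)
    exact hab ((h a ha hau).trans (h b hb hbu).symm)
  have hnbhd : ∀ u v, G.Adj z u → G.Adj z v → u ≠ v → G.Adj u v := by
    intro u v hu hv huv
    obtain ⟨x, hx, hxu, hxv⟩ := third u v
    exact hclique z u v x hu hv hx huv hxu.symm hxv.symm
  have hstep : ∀ v w, G.Adj z v → G.Adj v w → w ≠ z → G.Adj z w := by
    intro v w hv hvw hwz
    obtain ⟨x, hx, hxv, hxw⟩ := third v w
    exact hclique v z w x hv.symm hvw (hnbhd v x hv hx hxv.symm) hwz.symm (G.ne_of_adj hx)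
      hxw.symm
  have hall : ∀ w, w ≠ z → G.Adj z w := by
    intro w hwz
    by_contra hzw
    obtain ⟨d, -, hfst, hsnd⟩ := (hconn.preconnected z w).some.exists_boundary_dart
      {v | v = z ∨ G.Adj z v} (Or.inl rfl) (by simp [hwz, hzw])
    simp only [Set.mem_ofPred_eq, not_or] at hfst hsnd
    rcases hfst with h | h
    · exact hsnd.2 (h ▸ d.adj)
    · exact hsnd.2 (hstep _ _ h d.adj hsnd.1)
  ext u w
  refine ⟨G.ne_of_adj, fun huw => ?_⟩
  rcases eq_or_ne u z with rfl | huz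
  · exact hall w (Ne.symm huw)
  rcases eq_or_ne w z with rfl | hwz
  · exact (hall u huz).symm
  exact hnbhd u w (hall u huz) (hall w hwz) huw

lemma exists_isPath_forall_length_le [Fintype V] [Nonempty V] :
    ∃ (u v : V) (p : G.Walk u v), p.IsPath ∧
      ∀ (u' v' : V) (q : G.Walk u' v'), q.IsPath → q.length ≤ p.length := by
  let S : Set ℕ := {k | ∃ (u v : V) (p : G.Walk u v), p.IsPath ∧ p.length = k}
  have hbdd : BddAbove S := ⟨Fintype.card V, by rintro _ ⟨u, v, p, hp, rfl⟩; exact hp.length_lt.le⟩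
  have hne : S.Nonempty := ⟨0, Classical.arbitrary V, _, .nil, .nil, rfl⟩
  obtain ⟨u, v, p, hp, hlen⟩ := Nat.sSup_mem hne hbdd
  exact ⟨u, v, p, hp, fun u' v' q hq => hlen ▸ le_csSup hbdd ⟨u', v', q, hq, rfl⟩⟩

section MaxDegreeTwo

variable {u v : V} {p : G.Walk u v}

lemma eq_getVert_pred_or_succ_of_adj
    (hdeg : ∀ x a b c, G.Adj x a → G.Adj x b → G.Adj x c → a = b ∨ a = c ∨ b = c)
    (hp : p.IsPath) {i : ℕ} (hi0 : 0 < i) (hi : i < p.length) {w : V}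
    (hw : G.Adj (p.getVert i) w) : w = p.getVert (i - 1) ∨ w = p.getVert (i + 1) := by
  have hpred : G.Adj (p.getVert i) (p.getVert (i - 1)) := by
    simpa [Nat.sub_add_cancel hi0] using (p.adj_getVert_succ (i := i - 1) (by omega)).symm
  have hne : p.getVert (i - 1) ≠ p.getVert (i + 1) := fun h => by
    have := hp.getVert_injOn (by simp only [Set.mem_ofPred_eq]; omega)
      (by simp only [Set.mem_ofPred_eq]; omega) h
    omega
  rcases hdeg _ _ _ _ hpred (p.adj_getVert_succ hi) hw with h | h | h
  · exact absurd h hne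
  · exact Or.inl h.symm
  · exact Or.inr h.symm

lemma eq_succ_or_eq_zero_and_eq_length_of_adj_getVert
    (hdeg : ∀ x a b c, G.Adj x a → G.Adj x b → G.Adj x c → a = b ∨ a = c ∨ b = c)
    (hp : p.IsPath) {i j : ℕ} (hij : i < j) (hj : j ≤ p.length)
    (h : G.Adj (p.getVert i) (p.getVert j)) : j = i + 1 ∨ i = 0 ∧ j = p.length := by
  have hinj : ∀ {k l}, k ≤ p.length → l ≤ p.length → p.getVert k = p.getVert l → k = l :=
    fun hk hl h => hp.getVert_injOn hk hl h
  rcases Nat.eq_zero_or_pos i with rfl | hi0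
  · rcases hj.lt_or_eq with hjlt | rfl
    · rcases eq_getVert_pred_or_succ_of_adj hdeg hp hij hjlt h.symm with h' | h'
      · have := hinj (by omega) (by omega) h'; omega
      · have := hinj (by omega) (by omega) h'; omega
    · exact Or.inr ⟨rfl, rfl⟩
  · rcases eq_getVert_pred_or_succ_of_adj hdeg hp hi0 (by omega) h with h' | h'
    · have := hinj hj (by omega) h'; omega
    · exact Or.inl (hinj hj (by omega) h')

lemma adj_getVert_getVert_iff
    (hdeg : ∀ x a b c, G.Adj x a → G.Adj x b → G.Adj x c → a = b ∨ a = c ∨ b = c)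
    (hp : p.IsPath) {i j : ℕ} (hi : i ≤ p.length) (hj : j ≤ p.length) :
    G.Adj (p.getVert i) (p.getVert j) ↔ i + 1 = j ∨ j + 1 = i ∨
      2 ≤ p.length ∧ G.Adj u v ∧ (i = 0 ∧ j = p.length ∨ j = 0 ∧ i = p.length) := by
  constructor
  · intro h
    rcases lt_trichotomy i j with hij | rfl | hij
    · rcases eq_succ_or_eq_zero_and_eq_length_of_adj_getVert hdeg hp hij hj h with h' | ⟨rfl, rfl⟩
      · exact Or.inl h'.symm
      · rw [p.getVert_zero, p.getVert_length] at h
        rcases (show p.length = 1 ∨ 2 ≤ p.length by omega) with h1 | h2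
        · exact Or.inl h1.symm
        · exact Or.inr (Or.inr ⟨h2, h, Or.inl ⟨rfl, rfl⟩⟩)
    · exact (G.irrefl h).elim
    · rcases eq_succ_or_eq_zero_and_eq_length_of_adj_getVert hdeg hp hij hi h.symm with
        h' | ⟨rfl, rfl⟩
      · exact Or.inr (Or.inl h'.symm)
      · rw [p.getVert_zero, p.getVert_length] at h
        rcases (show p.length = 1 ∨ 2 ≤ p.length by omega) with h1 | h2
        · exact Or.inr (Or.inl h1.symm)
        · exact Or.inr (Or.inr ⟨h2, h.symm, Or.inr ⟨rfl, rfl⟩⟩)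
  · rintro (rfl | rfl | ⟨-, huv, ⟨rfl, rfl⟩ | ⟨rfl, rfl⟩⟩)
    · exact p.adj_getVert_succ (by omega)
    · exact (p.adj_getVert_succ (by omega)).symm
    · simpa using huv
    · simpa using huv.symm

lemma mem_support_of_forall_length_le
    (hdeg : ∀ x a b c, G.Adj x a → G.Adj x b → G.Adj x c → a = b ∨ a = c ∨ b = c)
    (hconn : G.Connected) (hp : p.IsPath)
    (hmax : ∀ (u' v' : V) (q : G.Walk u' v'), q.IsPath → q.length ≤ p.length) (w : V) :
    w ∈ p.support := by
  by_contra hw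
  obtain ⟨d, -, hfst, hsnd⟩ := (hconn.preconnected u w).some.exists_boundary_dart
    {x | x ∈ p.support} p.start_mem_support hw
  simp only [Set.mem_ofPred_eq] at hfst hsnd
  obtain ⟨i, hi, hil⟩ := Walk.mem_support_iff_exists_getVert.mp hfst
  rcases Nat.eq_zero_or_pos i with rfl | hi0
  · rw [p.getVert_zero] at hi
    have := hmax _ _ (.cons (hi ▸ d.adj.symm) p) (hp.cons hsnd)
    simp at this
  rcases hil.lt_or_eq with hlt | rfl
  · rcases eq_getVert_pred_or_succ_of_adj hdeg hp hi0 hlt (hi ▸ d.adj) with h | h <;>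
      exact hsnd (h ▸ p.getVert_mem_support _)
  · rw [p.getVert_length] at hi
    have := hmax _ _ (.cons (hi ▸ d.adj.symm) p.reverse) (hp.reverse.cons (by simpa using hsnd))
    simp at this

/-- A longest path exhausts the vertices, and its only possible chord joins its two ends. -/
theorem Connected.nonempty_iso_pathGraph_or_cycleGraph [Fintype V] (hconn : G.Connected)
    (hdeg : ∀ x a b c, G.Adj x a → G.Adj x b → G.Adj x c → a = b ∨ a = c ∨ b = c) :
    (∃ k, 1 ≤ k ∧ Nonempty (G ≃g pathGraph k)) ∨ (∃ k, 3 ≤ k ∧ Nonempty (G ≃g cycleGraph k)) := by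
  have := hconn.nonempty
  obtain ⟨u, v, p, hp, hmax⟩ := exists_isPath_forall_length_le (G := G)
  set m := p.length
  let e : Fin (m + 1) ≃ V := Equiv.ofBijective (fun i => p.getVert i)
    ⟨fun i j h => Fin.ext (hp.getVert_injOn (by simp only [Set.mem_ofPred_eq]; omega)
      (by simp only [Set.mem_ofPred_eq]; omega) h),
     fun w => by
      obtain ⟨i, hi, hil⟩ := Walk.mem_support_iff_exists_getVert.mp
        (mem_support_of_forall_length_le hdeg hconn hp hmax w)
      exact ⟨⟨i, by omega⟩, hi⟩⟩
  have hadj : ∀ i j : Fin (m + 1), G.Adj (e i) (e j) ↔ i.val + 1 = j ∨ j.val + 1 = i ∨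
      2 ≤ m ∧ G.Adj u v ∧ (i.val = 0 ∧ j.val = m ∨ j.val = 0 ∧ i.val = m) :=
    fun i j => adj_getVert_getVert_iff hdeg hp (by omega) (by omega)
  by_cases hcyc : 2 ≤ m ∧ G.Adj u v
  · refine Or.inr ⟨m + 1, by omega, ⟨(⟨e, fun {i j} => ?_⟩ : cycleGraph (m + 1) ≃g G).symm⟩⟩
    rw [hadj, cycleGraph_adj_iff (by omega)]
    simp only [hcyc, true_and]
    omega
  · refine Or.inl ⟨m + 1, by omega, ⟨(⟨e, fun {i j} => ?_⟩ : pathGraph (m + 1) ≃g G).symm⟩⟩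
    rw [hadj, pathGraph_adj, ← and_assoc]
    simp only [hcyc, false_and, or_false]

end MaxDegreeTwo

end SimpleGraph

section SphereEmbedding

variable {V E : Type*} [NormedAddCommGroup E] [InnerProductSpace ℝ E] {G : SimpleGraph V}
  {f : V → E} {r : ℝ}

lemma adj_of_three_neighbors (hconn : G.Connected) (hsph : ∀ x, ‖f x‖ = r)
    (hf : ∀ x y, ⟪f x, f y⟫_ℝ = r ^ 2 * cos (G.dist x y / r))
    (ht0 : 0 < cos (1 / r)) (ht1 : cos (1 / r) < 1) {y a b c : V} (ha : G.Adj y a)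
    (hb : G.Adj y b) (hc : G.Adj y c) (hab : a ≠ b) (hac : a ≠ c) (hbc : b ≠ c) : G.Adj a b := by
  set t := cos (1 / r)
  have hr : 0 < r ^ 2 := by
    have : r ≠ 0 := by rintro rfl; simp [t] at ht1
    positivity
  have hdist : ∀ {x z}, G.Adj y x → G.Adj y z → x ≠ z → G.dist x z = 1 ∨ G.dist x z = 2 := by
    intro x z hx hz hxz
    have := hconn.dist_triangle (u := x) (v := y) (w := z)
    rw [dist_eq_one_iff_adj.mpr hx.symm, dist_eq_one_iff_adj.mpr hz] at this
    have := hconn.pos_dist_of_ne hxz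
    omega
  have h1 : ∀ {x z}, G.Adj x z → ⟪f x, f z⟫_ℝ = r ^ 2 * t := fun h => by
    rw [hf, dist_eq_one_iff_adj.mpr h, Nat.cast_one]
  have h2 : ∀ {x z}, G.dist x z = 2 → ⟪f x, f z⟫_ℝ = r ^ 2 * (2 * t ^ 2 - 1) := fun h => by
    rw [hf, h, show ((2 : ℕ) : ℝ) / r = 2 * (1 / r) by push_cast; ring, cos_two_mul]
  have h12 : ∀ {x z}, G.Adj y x → G.Adj y z → x ≠ z →
      ⟪f x, f z⟫_ℝ = r ^ 2 * t ∨ ⟪f x, f z⟫_ℝ = r ^ 2 * (2 * t ^ 2 - 1) := fun hx hz hxz =>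
    (hdist hx hz hxz).imp (fun h => h1 (dist_eq_one_iff_adj.mp h)) h2
  by_contra hnab
  have hab2 : G.dist a b = 2 := (hdist ha hb hab).resolve_left (hnab ∘ dist_eq_one_iff_adj.mp)
  have hrefl := eq_two_mul_smul_sub_of_inner_eq (hsph y) (hsph a) (hsph b) (h1 ha) (h1 hb)
    (h2 hab2)
  have hsum : ⟪f a, f c⟫_ℝ + ⟪f b, f c⟫_ℝ = 2 * r ^ 2 * t ^ 2 := by
    rw [hrefl, inner_sub_left, real_inner_smul_left, h1 hc]
    ring
  have h1t := mul_pos hr (sub_pos.2 ht1)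
  rcases h12 ha hc hac with h | h <;> rcases h12 hb hc hbc with h' | h' <;> rw [h, h'] at hsum <;>
    nlinarith [mul_pos h1t ht0, mul_pos h1t (show 0 < 1 + t by linarith)]

lemma exists_injective_hom_GnAbs [FiniteDimensional ℝ E] {n : ℕ}
    (hE : Module.finrank ℝ E ≤ n + 1) (hconn : G.Connected) (hinj : Function.Injective f)
    (hsph : ∀ x, ‖f x‖ = r) (hf : ∀ x y, ⟪f x, f y⟫_ℝ = r ^ 2 * cos (G.dist x y / r))
    (hdist : ∀ x y, (G.dist x y : ℝ) ≤ r * π) (hrπ : r * π = 2) :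
    ∃ ι : V → Fin (n + 1) × Bool, Function.Injective ι ∧
      ∀ x y, G.Adj x y → (GnAbs n).Adj (ι x) (ι y) := by
  have hr : r ≠ 0 := by rintro rfl; simp at hrπ
  have hangle : ∀ x y, (G.dist x y : ℝ) / r = G.dist x y * (π / 2) := by
    intro x y
    rw [div_eq_iff hr]
    linear_combination (-(G.dist x y : ℝ) / 2) * hrπ
  have hinner1 : ∀ {x y}, G.Adj x y → ⟪f x, f y⟫_ℝ = 0 := fun h => by
    rw [hf, hangle, dist_eq_one_iff_adj.mpr h]
    simp
  obtain ⟨ι, hι, hιf⟩ := exists_injective_fst_ne_of_inner_eq_zero_or_eq_neg hE hinj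
    (fun x => ne_zero_of_norm_ne_zero ((hsph x).trans_ne hr)) fun x y hxy => by
      have hpos := hconn.pos_dist_of_ne hxy
      have hle : G.dist x y ≤ 2 := by exact_mod_cast (hdist x y).trans_eq hrπ
      rcases (show G.dist x y = 1 ∨ G.dist x y = 2 by omega) with h | h
      · exact Or.inl (hinner1 (dist_eq_one_iff_adj.mp h))
      · refine Or.inr (eq_neg_of_inner_eq_neg_sq (hsph x) (hsph y) ?_)
        rw [hf, hangle, h, Nat.cast_ofNat, mul_div_cancel₀ π two_ne_zero, cos_pi]
        ring
  exact ⟨ι, hι, fun x y h => hιf x y (hinner1 h)⟩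

lemma card_le_finrank_add_one_of_eq_top [FiniteDimensional ℝ E] [Fintype V] (htop : G = ⊤)
    (hsph : ∀ x, ‖f x‖ = r) (hf : ∀ x y, ⟪f x, f y⟫_ℝ = r ^ 2 * cos (G.dist x y / r))
    (hdist : ∀ x y, (G.dist x y : ℝ) ≤ r * π) :
    Fintype.card V ≤ Module.finrank ℝ E + 1 := by
  rcases le_or_gt (Fintype.card V) 1 with h | h
  · omega
  have hdist1 : ∀ {x y}, x ≠ y → G.dist x y = 1 := fun hxy =>
    dist_eq_one_iff_adj.mpr (htop ▸ hxy)
  obtain ⟨x, y, hxy⟩ := Fintype.exists_pair_of_one_lt_card h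
  have hrπ : 1 ≤ r * π := by simpa [hdist1 hxy] using hdist x y
  have hr : 0 < r := by nlinarith [pi_pos]
  have hcos : cos (1 / r) < 1 := by
    simpa using cos_lt_cos_of_nonneg_of_le_pi le_rfl (by rw [div_le_iff₀ hr]; linarith)
      (one_div_pos.mpr hr)
  refine card_le_finrank_add_one_of_inner_eq hsph (mul_lt_of_lt_one_right (by positivity) hcos).ne
    fun x y hxy => by rw [hf, hdist1 hxy, Nat.cast_one]

lemma two_le_mul_pi_of_ne_top (hconn : G.Connected) (htop : G ≠ ⊤)
    (hdist : ∀ x y, (G.dist x y : ℝ) ≤ r * π) : 2 ≤ r * π := by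
  obtain ⟨u, w, huw, hnadj⟩ : ∃ u w, u ≠ w ∧ ¬G.Adj u w := by
    by_contra! h
    exact htop (eq_top_iff.mpr fun u w huw => h u w huw)
  have hpos := hconn.pos_dist_of_ne huw
  have hne1 : G.dist u w ≠ 1 := hnadj ∘ dist_eq_one_iff_adj.mp
  exact le_trans (by exact_mod_cast (show 2 ≤ G.dist u w by omega)) (hdist u w)

lemma nonempty_iso_pathGraph_or_cycleGraph_of_two_lt [Fintype V] (hconn : G.Connected)
    (htop : G ≠ ⊤) (hr : 0 < r) (hsph : ∀ x, ‖f x‖ = r)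
    (hf : ∀ x y, ⟪f x, f y⟫_ℝ = r ^ 2 * cos (G.dist x y / r)) (hrπ : 2 < r * π) :
    (∃ k, 1 ≤ k ∧ Nonempty (G ≃g pathGraph k)) ∨ (∃ k, 3 ≤ k ∧ Nonempty (G ≃g cycleGraph k)) := by
  have hθ : 1 / r < π / 2 := by
    rw [div_lt_iff₀ hr]
    linarith
  have ht0 : 0 < cos (1 / r) := cos_pos_of_mem_Ioo ⟨by linarith [pi_pos, one_div_pos.mpr hr], hθ⟩
  have ht1 : cos (1 / r) < 1 := by
    simpa using cos_lt_cos_of_nonneg_of_le_pi le_rfl (by linarith [pi_pos]) (one_div_pos.mpr hr)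
  refine hconn.nonempty_iso_pathGraph_or_cycleGraph fun x a b c ha hb hc => ?_
  by_contra! hne
  exact htop (hconn.eq_top_of_adj_of_three_neighbors
    (fun _ _ _ _ => adj_of_three_neighbors hconn hsph hf ht0 ht1) ha hb hc hne.1 hne.2.1 hne.2.2)

end SphereEmbedding

theorem sphere_embedding_classification_general {n : ℕ} {r : ℝ} (hr : 0 < r)
    {V : Type*} [Fintype V] (G : SimpleGraph V) (hconn : G.Connected)
    (f : V → EuclideanSpace ℝ (Fin (n + 1)))
    (hsph : ∀ x, ‖f x‖ = r) (hinj : Function.Injective f)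
    (hiso : ∀ x y : V, (G.dist x y : ℝ) = sphereGeoDist r (f x) (f y)) :
    (∃ k : ℕ, 1 ≤ k ∧ Nonempty (G ≃g SimpleGraph.pathGraph k)) ∨
    (∃ k : ℕ, 3 ≤ k ∧ Nonempty (G ≃g SimpleGraph.cycleGraph k)) ∨
    (G = ⊤ ∧ Fintype.card V ≤ n + 2) ∨
    (∃ ι : V → Fin (n + 1) × Bool, Function.Injective ι ∧
      ∀ x y : V, G.Adj x y → (GnAbs n).Adj (ι x) (ι y)) := by
  have hf : ∀ x y, ⟪f x, f y⟫_ℝ = r ^ 2 * cos (G.dist x y / r) := fun x y => by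
    rw [hiso]
    exact inner_eq_sq_mul_cos_sphereGeoDist hr (hsph x) (hsph y)
  have hdist : ∀ x y, (G.dist x y : ℝ) ≤ r * π := fun x y =>
    (hiso x y).trans_le (sphereGeoDist_le_mul_pi hr.le _ _)
  have hE : Module.finrank ℝ (EuclideanSpace ℝ (Fin (n + 1))) = n + 1 := by simp
  by_cases htop : G = ⊤
  · refine Or.inr (Or.inr (Or.inl ⟨htop, ?_⟩))
    simpa [hE] using card_le_finrank_add_one_of_eq_top htop hsph hf hdist
  rcases (two_le_mul_pi_of_ne_top hconn htop hdist).eq_or_lt with hrπ | hrπ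
  · exact Or.inr (Or.inr (Or.inr
      (exists_injective_hom_GnAbs hE.le hconn hinj hsph hf hdist hrπ.symm)))
  · exact (nonempty_iso_pathGraph_or_cycleGraph_of_two_lt hconn htop hr hsph hf hrπ).imp_right
      Or.inl

/-- If a connected finite graph `G` isometrically embeds into the sphere
of some radius `r` in `ℝ^{n+1}` (`n ≥ 2`, geodesic metric), then `G` is a path graph,
a cycle graph, a complete graph on at most `n + 2` vertices, or a subgraph of `G_n`. -/
theorem sphere_embedding_classification {n : ℕ} (hn : 2 ≤ n) {r : ℝ} (hr : 0 < r)
    {V : Type*} [Fintype V] (G : SimpleGraph V) (hconn : G.Connected)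
    (f : V → EuclideanSpace ℝ (Fin (n + 1)))
    (hsph : ∀ x, ‖f x‖ = r) (hinj : Function.Injective f)
    (hiso : ∀ x y : V, (G.dist x y : ℝ) = sphereGeoDist r (f x) (f y)) :
    (∃ k : ℕ, 1 ≤ k ∧ Nonempty (G ≃g SimpleGraph.pathGraph k)) ∨
    (∃ k : ℕ, 3 ≤ k ∧ Nonempty (G ≃g SimpleGraph.cycleGraph k)) ∨
    (G = ⊤ ∧ Fintype.card V ≤ n + 2) ∨
    (∃ ι : V → Fin (n + 1) × Bool, Function.Injective ι ∧
      ∀ x y : V, G.Adj x y → (GnAbs n).Adj (ι x) (ι y)) :=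
  sphere_embedding_classification_general hr G hconn f hsph hinj hiso
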